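/- Let G be a finite simple graph with a k-correspondence assignment C, and let H be a subgraph of G that is a forest (contains no cycle). Then there exists a k-correspondence assignment C' for G equivalent to C such that all edges of H are straight in C' and all vertices of G not belonging to H are fixed in the equivalence. -/

import Mathlib

/-- A `k`-correspondence assignment for a graph `G`: to each ordered pair of adjacent
vertices it assigns a partial injective function (partial equivalence) on colors
`Fin k`, such that `C_{vu}` is the inverse of `C_{uv}`. -/
structure CorrAssign {V : Type*} (G : SimpleGraph V) (k : ℕ) where
  corr : V → V → (Fin k) ≃. (Fin k)
  corr_symm : ∀ u v, G.Adj u v → corr v u = (corr u v).symm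

namespace CorrAssign

variable {V : Type*} {G : SimpleGraph V} {k : ℕ}

/-- A `C`-coloring of `G`. -/
def IsColoring (C : CorrAssign G k) (f : V → Fin k) : Prop :=
  ∀ u v, G.Adj u v → C.corr u v (f u) ≠ some (f v)

/-- `G` is `C`-colorable. -/
def Colorable (C : CorrAssign G k) : Prop := ∃ f, C.IsColoring f

/-- The composed correspondence along a walk. -/
def walkCorr (C : CorrAssign G k) : {u v : V} → G.Walk u v → (Fin k) ≃. (Fin k)
  | _, _, SimpleGraph.Walk.nil => PEquiv.refl _
  | _, _, @SimpleGraph.Walk.cons _ _ a b _ _h p => (C.corr a b).trans (C.walkCorr p)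

/-- `C` is consistent on a closed walk `W`. -/
def ConsistentOn (C : CorrAssign G k) {u : V} (W : G.Walk u u) : Prop :=
  ∀ c c' : Fin k, C.walkCorr W c = some c' → c' = c

/-- `C` is consistent. -/
def Consistent (C : CorrAssign G k) : Prop :=
  ∀ (u : V) (W : G.Walk u u), C.ConsistentOn W

end CorrAssign

/-- `G` is `k`-choosable: any assignment of lists of `k` colors admits a proper coloring
from the lists. -/
def Choosable {V : Type*} (G : SimpleGraph V) (k : ℕ) : Prop :=
  ∀ L : V → Finset ℕ, (∀ v, (L v).card = k) →
    ∃ φ : V → ℕ, (∀ v, φ v ∈ L v) ∧ ∀ u v, G.Adj u v → φ u ≠ φ v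

namespace CorrAssign

variable {V : Type*} {G : SimpleGraph V} {k : ℕ}

/-- `C` and `C'` are equivalent `k`-correspondence assignments, witnessed by the family of
permutations `π`: for every edge `uv`, a color `c` lies in the domain of `C_{uv}` iff
`π u c` lies in the domain of `C'_{uv}`, and `C'_{uv} (π u c) = π v (C_{uv} c)` there.
(Both conditions are captured by `Option.map`.) -/
def EquivVia (C C' : CorrAssign G k) (π : V → Equiv.Perm (Fin k)) : Prop :=
  ∀ u v, G.Adj u v → ∀ c : Fin k, C'.corr u v (π u c) = Option.map (π v) (C.corr u v c)

/-- The edge `uv` is straight in `C`: `C_{uv}` is the identity on its domain. -/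
def Straight (C : CorrAssign G k) (u v : V) : Prop :=
  ∀ c c' : Fin k, C.corr u v c = some c' → c' = c

/-- The edge `uv` is full in `C`: the domain of `C_{uv}` is all of `Fin k`. -/
def Full (C : CorrAssign G k) (u v : V) : Prop :=
  ∀ c : Fin k, (C.corr u v c).isSome

end CorrAssign

/-!
Induct on the number of edges of the forest. Remove an edge `uv`, straighten the rest, and
then compose the colors at every vertex on `u`'s side of the cut forest with one permutation
`σ` of the colors extending the partial bijection `C_{uv}`. Since `uv` was a bridge, this
straightens `uv` while leaving every other forest edge straight (both its ends get the same
permutation), and vertices outside the forest are never moved.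
-/

theorem PEquiv.exists_le_toPEquiv {α : Type*} [Finite α] (f : α ≃. α) :
    ∃ σ : Equiv.Perm α, f ≤ σ.toPEquiv := by
  obtain ⟨σ, hσ⟩ := Equiv.Perm.exists_extending_pair (fun a : {a // (f a).isSome} => a.1)
    (fun a => (f a).get a.2) Subtype.val_injective
    fun a b hab => Subtype.ext <|
      f.inj (Option.get_mem a.2) (by simp only at hab; exact hab ▸ Option.get_mem b.2)
  refine ⟨σ, PEquiv.le_def.mpr fun a b hab => ?_⟩
  have ha : (f a).isSome := Option.isSome_iff_exists.mpr ⟨b, hab⟩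
  simp [Equiv.toPEquiv_apply, hσ ⟨a, ha⟩, Option.get_of_mem ha hab]

namespace CorrAssign

variable {V : Type*} {G : SimpleGraph V} {k : ℕ}

def relabel (C : CorrAssign G k) (π : V → Equiv.Perm (Fin k)) : CorrAssign G k where
  corr a b := ((π a).symm.toPEquiv.trans (C.corr a b)).trans (π b).toPEquiv
  corr_symm u v h := by
    simp [C.corr_symm u v h, PEquiv.symm_trans_rev, ← Equiv.toPEquiv_symm, PEquiv.trans_assoc]

theorem relabel_corr_apply (C : CorrAssign G k) (π : V → Equiv.Perm (Fin k)) (a b : V)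
    (c : Fin k) : (C.relabel π).corr a b c = (C.corr a b ((π a).symm c)).map (π b) := by
  rw [Option.map_eq_bind]
  rfl

theorem equivVia_relabel (C : CorrAssign G k) (π : V → Equiv.Perm (Fin k)) :
    C.EquivVia (C.relabel π) π := by
  intro u v _ c
  simp [relabel_corr_apply]

theorem EquivVia.trans {C C₁ C₂ : CorrAssign G k} {π₁ π₂ : V → Equiv.Perm (Fin k)}
    (h₁ : C.EquivVia C₁ π₁) (h₂ : C₁.EquivVia C₂ π₂) : C.EquivVia C₂ (π₂ * π₁) := by
  intro u v huv c
  simp [h₂ u v huv, h₁ u v huv, Option.map_map, Function.comp_def]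

theorem Straight.symm {C : CorrAssign G k} {u v : V} (huv : G.Adj u v) (h : C.Straight u v) :
    C.Straight v u := by
  intro c c' hc
  rw [C.corr_symm u v huv, PEquiv.eq_some_iff] at hc
  exact (h c' c hc).symm

theorem straight_relabel_iff {C : CorrAssign G k} {π : V → Equiv.Perm (Fin k)} {a b : V} :
    (C.relabel π).Straight a b ↔ ∀ c d, C.corr a b c = some d → π b d = π a c := by
  constructor
  · intro h c d hcd
    exact h (π a c) (π b d) (by simp [relabel_corr_apply, hcd])
  · intro h c c' hc
    rw [relabel_corr_apply, Option.map_eq_some_iff] at hc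
    obtain ⟨d, hd, rfl⟩ := hc
    rw [h _ d hd, Equiv.apply_symm_apply]

end CorrAssign

theorem SimpleGraph.IsIsolated.eq_of_reachable {V : Type*} {G : SimpleGraph V} {u v : V}
    (hv : G.IsIsolated v) (h : G.Reachable u v) : u = v := by
  by_contra huv
  exact G.mem_support_iff_not_isIsolated.mp (mem_support_of_reachable (Ne.symm huv) h.symm) hv

namespace CorrAssign

open SimpleGraph

variable {V : Type*} {G F : SimpleGraph V} {k : ℕ}

theorem exists_relabel_straight_of_isBridge (hFG : F ≤ G) {u v : V} (huv : F.Adj u v)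
    (hbridge : F.IsBridge s(u, v)) (C : CorrAssign G k)
    (hC : ∀ a b, (F.deleteEdges {s(u, v)}).Adj a b → C.Straight a b) :
    ∃ π : V → Equiv.Perm (Fin k),
      (∀ a b, F.Adj a b → (C.relabel π).Straight a b) ∧ ∀ x, F.IsIsolated x → π x = 1 := by
  classical
  set F' := F.deleteEdges {s(u, v)}
  have hcut : ¬ F'.Reachable u v := hbridge
  obtain ⟨σ, hσ⟩ := (C.corr u v).exists_le_toPEquiv
  let π : V → Equiv.Perm (Fin k) := fun x => if F'.Reachable u x then σ else 1
  have hcross : (C.relabel π).Straight u v := by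
    refine straight_relabel_iff.mpr fun c d hcd => ?_
    have hσcd : σ c = d := Option.some_injective _
      ((Equiv.toPEquiv_apply σ c).symm.trans (PEquiv.le_def.mp hσ c d hcd))
    simp [π, hcut, hσcd]
  refine ⟨π, fun a b hab => ?_, fun x hx => if_neg fun hux => ?_⟩
  · by_cases habe : s(a, b) = s(u, v)
    · rcases Sym2.eq_iff.mp habe with ⟨rfl, rfl⟩ | ⟨rfl, rfl⟩
      · exact hcross
      · exact hcross.symm (hFG huv)
    · have hab' : F'.Adj a b := (deleteEdges_adj ..).mpr ⟨hab, habe⟩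
      have hside : F'.Reachable u a ↔ F'.Reachable u b :=
        ⟨fun h => h.trans hab'.reachable, fun h => h.trans hab'.symm.reachable⟩
      have hπ : π a = π b := by simp only [π, hside]
      exact straight_relabel_iff.mpr fun c d hcd => by rw [← hπ, hC a b hab' c d hcd]
  · have hxF' : F'.IsIsolated x := fun w hw => hx w (deleteEdges_le _ hw)
    exact hx v (hxF'.eq_of_reachable hux ▸ huv)

theorem exists_equivVia_straight_of_isAcyclic (hFG : F ≤ G) (hF : F.IsAcyclic)
    (hfin : F.edgeSet.Finite) (C : CorrAssign G k) :
    ∃ (C' : CorrAssign G k) (π : V → Equiv.Perm (Fin k)),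
      C.EquivVia C' π ∧ (∀ a b, F.Adj a b → C'.Straight a b) ∧
      ∀ v, F.IsIsolated v → π v = 1 := by
  induction hn : F.edgeSet.ncard generalizing F C with
  | zero =>
    have hempty : F.edgeSet = ∅ := (Set.ncard_eq_zero hfin).mp hn
    refine ⟨C.relabel 1, 1, C.equivVia_relabel 1, fun a b hab => ?_, fun _ _ => rfl⟩
    exact absurd (F.mem_edgeSet.mpr hab) (hempty ▸ Set.notMem_empty _)
  | succ n ih =>
    obtain ⟨e, he⟩ := Set.nonempty_of_ncard_ne_zero (by rw [hn]; exact n.succ_ne_zero)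
    induction e using Sym2.ind with | _ u v =>
    have hF'F : F.deleteEdges {s(u, v)} ≤ F := deleteEdges_le _
    obtain ⟨C₁, π₁, hC₁, hst₁, hfix₁⟩ := ih (hF'F.trans hFG) (hF.anti hF'F)
      (hfin.subset (edgeSet_mono hF'F)) C
      (by rw [edgeSet_deleteEdges, Set.ncard_sdiff_singleton_of_mem he, hn, Nat.add_sub_cancel])
    obtain ⟨π₂, hst₂, hfix₂⟩ := exists_relabel_straight_of_isBridge hFG he
      (isAcyclic_iff_forall_isBridge.mp hF he) C₁ hst₁
    refine ⟨C₁.relabel π₂, π₂ * π₁, hC₁.trans (C₁.equivVia_relabel π₂), hst₂, fun x hx => ?_⟩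
    rw [Pi.mul_apply, hfix₂ x hx, hfix₁ x fun w hw => hx w (hF'F hw), one_mul]

end CorrAssign

theorem SimpleGraph.Subgraph.isAcyclic_spanningCoe {V : Type*} {G : SimpleGraph V}
    {H : G.Subgraph}
    (h : ∀ (u : V) (K : G.Walk u u), K.IsCycle → ¬ (∀ e ∈ K.edges, e ∈ H.edgeSet)) :
    H.spanningCoe.IsAcyclic := fun u K hK =>
  h u (K.mapLe H.spanningCoe_le) (hK.mapLe _) fun e he => by
    rw [Walk.edges_mapLe_eq_edges] at he
    exact H.edgeSet_spanningCoe ▸ K.edges_subset_edgeSet he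

/-- Lemma 4 applied to forests: let `G` be a finite simple graph with a
`k`-correspondence assignment `C`, and let `H` be a subgraph of `G` containing no cycle
(no cycle of `G` has all of its edges in `H`). Then there is a `k`-correspondence
assignment `C'` equivalent to `C` in which all edges of `H` are straight, with all
vertices outside `H` fixed. -/
theorem straighten_forest {V : Type*} [Fintype V] {G : SimpleGraph V} {k : ℕ}
    (C : CorrAssign G k) (H : G.Subgraph)
    (hforest : ∀ (u : V) (K : G.Walk u u), K.IsCycle → ¬ (∀ e ∈ K.edges, e ∈ H.edgeSet)) :
    ∃ (C' : CorrAssign G k) (π : V → Equiv.Perm (Fin k)),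
      C.EquivVia C' π ∧ (∀ a b : V, H.Adj a b → C'.Straight a b) ∧
      ∀ v : V, v ∉ H.verts → π v = 1 := by
  obtain ⟨C', π, hC', hstraight, hfixed⟩ := C.exists_equivVia_straight_of_isAcyclic
    H.spanningCoe_le (H.isAcyclic_spanningCoe hforest) (Set.toFinite _)
  exact ⟨C', π, hC', hstraight, fun v hv => hfixed v fun _ hvw => hv (H.edge_vert hvw)⟩
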